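/- Let M be a simple, cosimple, connected matroid, and let (A,B) be a 2-separation of M. Then (fcl_M(A), B − fcl_M(A)) is a 2-separation of M, where fcl_M(A) is the full closure of A. -/

import Mathlib

open Matroid Set

namespace ExMinors

variable {α β γ : Type}

/-! ### Basic matroid notions -/

/-- The (extended, `ℕ∞`-valued) rank of a set `X` in a matroid `M`: the supremum of the
cardinalities of independent subsets of `X`. -/
noncomputable def eRank (M : Matroid α) (X : Set α) : ℕ∞ :=
  ⨆ I ∈ {I | M.Indep I ∧ I ⊆ X}, I.encard

/-- `(A, B)` is a 2-separation of `M`: a partition of the ground set into two parts of size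
at least two with `r A + r B ≤ r M + 1`. -/
def TwoSep (M : Matroid α) (A B : Set α) : Prop :=
  A ∪ B = M.E ∧ Disjoint A B ∧ 2 ≤ A.encard ∧ 2 ≤ B.encard ∧
    eRank M A + eRank M B ≤ eRank M M.E + 1

/-- `C` is a circuit of `M` : a minimal dependent set. -/
def IsCircuitM (M : Matroid α) (C : Set α) : Prop :=
  C ⊆ M.E ∧ ¬ M.Indep C ∧ ∀ x ∈ C, M.Indep (C \ {x})

/-- A matroid is connected if it is nonempty and every two distinct elements of the
ground set lie on a common circuit. -/
def ConnectedM (M : Matroid α) : Prop :=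
  M.E.Nonempty ∧ ∀ e ∈ M.E, ∀ f ∈ M.E, e = f ∨ ∃ C, IsCircuitM M C ∧ e ∈ C ∧ f ∈ C

/-- A matroid is 3-connected if it is connected and has no 2-separation. -/
def ThreeConnected (M : Matroid α) : Prop :=
  ConnectedM M ∧ ∀ A B, ¬ TwoSep M A B

/-- A matroid is simple if every subset of the ground set with at most two elements
is independent. -/
def SimpleM (M : Matroid α) : Prop :=
  ∀ e ∈ M.E, ∀ f ∈ M.E, M.Indep {e, f}

def CosimpleM (M : Matroid α) : Prop := SimpleM M✶

/-! ### Minors -/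

/-- Deletion of the set `D` from `M`. -/
def del (M : Matroid α) (D : Set α) : Matroid α := M ↾ (M.E \ D)

/-- Contraction of the set `C` in `M`, defined by duality. -/
def con (M : Matroid α) (C : Set α) : Matroid α := (del M✶ C)✶

/-- `N` is a minor of `M`. -/
def IsMinor (N M : Matroid α) : Prop := ∃ C D : Set α, N = del (con M C) D

/-! ### Isomorphism -/

/-- `φ` is an isomorphism from `M` to `N`: a bijection between the ground sets which
preserves independence. -/
def MIsoVia (M : Matroid α) (N : Matroid β) (φ : α → β) : Prop :=
  Set.BijOn φ M.E N.E ∧ ∀ I ⊆ M.E, (M.Indep I ↔ N.Indep (φ '' I))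

/-- `M` and `N` are isomorphic matroids. -/
def MIso (M : Matroid α) (N : Matroid β) : Prop := ∃ φ, MIsoVia M N φ

/-- `φ` is an automorphism of `M`. -/
def IsAuto (M : Matroid α) (φ : α → α) : Prop := MIsoVia M M φ

/-- `M` has a minor isomorphic to the matroid `N`. -/
def HasMinorIso (M : Matroid α) (N : Matroid β) : Prop :=
  ∃ N' : Matroid α, IsMinor N' M ∧ MIso N' N

/-! ### Representations -/

/-- `M` is the matroid on ground set `range g` (with `g` injective) represented by the
family of column vectors `cols`. -/
def ReppedBy {ι F : Type} [Field F] {n : ℕ} (M : Matroid α) (cols : ι → Fin n → F)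
    (g : ι → α) : Prop :=
  Function.Injective g ∧ M.E = Set.range g ∧
    ∀ J : Set ι, (M.Indep (g '' J) ↔ LinearIndependent F (J.restrict cols))

/-- `M` is isomorphic to the matroid of the `k` columns `cols` over the field `F`. -/
def IsColM {F : Type} [Field F] {k n : ℕ} (cols : Fin k → Fin n → F) (M : Matroid α) : Prop :=
  ∃ g : Fin k → α, ReppedBy M cols g

/-- `M` is representable over the field `F` (by vectors in some finite power of `F`). -/
def RepOver (F : Type) [Field F] (M : Matroid α) : Prop :=
  ∃ (n : ℕ) (v : α → Fin n → F), ∀ I ⊆ M.E, (M.Indep I ↔ LinearIndependent F (I.restrict v))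

/-! ### Named matroids -/

/-- `M` is isomorphic to the uniform matroid `U_{m,n}`. -/
def IsUniform (m n : ℕ) (M : Matroid α) : Prop :=
  M.E.Finite ∧ M.E.ncard = n ∧ ∀ I ⊆ M.E, (M.Indep I ↔ I.ncard ≤ m)

/-- The columns of a `GF(2)`-representation of the Fano matroid `F₇`. -/
def fanoCols : Fin 7 → Fin 3 → ZMod 2 :=
  ![![1,0,0], ![0,1,0], ![0,0,1], ![0,1,1], ![1,0,1], ![1,1,0], ![1,1,1]]

/-- `M` is isomorphic to the Fano matroid `F₇`. -/
def IsF7 (M : Matroid α) : Prop := IsColM fanoCols M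

/-- `M` is isomorphic to `F₇*`. -/
def IsF7dual (M : Matroid α) : Prop := IsF7 M✶

/-- The columns of a `GF(3)`-representation of the non-Fano matroid `F₇⁻`. -/
def nonFanoCols : Fin 7 → Fin 3 → ZMod 3 :=
  ![![1,0,0], ![0,1,0], ![0,0,1], ![0,1,1], ![1,0,1], ![1,1,0], ![1,1,1]]

/-- `M` is isomorphic to the non-Fano matroid `F₇⁻`. -/
def IsNonFano (M : Matroid α) : Prop := IsColM nonFanoCols M

/-- `M` is isomorphic to `(F₇⁻)*`. -/
def IsNonFanoDual (M : Matroid α) : Prop := IsNonFano M✶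

/-- The columns `[I₄ | A₈]` of the `GF(3)`-representation of `P₈`. -/
def p8Cols : Fin 8 → Fin 4 → ZMod 3 :=
  ![![1,0,0,0], ![0,1,0,0], ![0,0,1,0], ![0,0,0,1],
    ![0,1,1,-1], ![1,0,1,1], ![1,1,0,1], ![-1,1,1,0]]

/-- `M` is isomorphic to `P₈`. -/
def IsP8 (M : Matroid α) : Prop := IsColM p8Cols M

/-- `M` is isomorphic to `P₆`: rank 3, six elements, whose only non-spanning circuit is a
single 3-point line. -/
def IsP6 (M : Matroid α) : Prop :=
  M.E.Finite ∧ M.E.ncard = 6 ∧ ∃ T ⊆ M.E, T.ncard = 3 ∧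
    ∀ I ⊆ M.E, (M.Indep I ↔ I.ncard ≤ 3 ∧ I ≠ T)

/-- The columns of a `GF(3)`-representation of `AG(2,3)`: the nine points `(1, x, y)`. -/
def ag23Cols : Fin 9 → Fin 3 → ZMod 3 :=
  fun j => ![1, ((j : ℕ) % 3 : ZMod 3), ((j : ℕ) / 3 : ZMod 3)]

/-- `M` is isomorphic to the ternary affine plane `AG(2,3)`. -/
def IsAG23 (M : Matroid α) : Prop := IsColM ag23Cols M

/-- The columns of a `GF(3)`-representation of `AG(2,3)\e` (one point deleted). -/
def agdeCols : Fin 8 → Fin 3 → ZMod 3 :=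
  fun j => ![1, ((j : ℕ) % 3 : ZMod 3), ((j : ℕ) / 3 : ZMod 3)]

/-- `M` is isomorphic to `AG(2,3)\e`. -/
def IsAGde (M : Matroid α) : Prop := IsColM agdeCols M

/-- `M` is isomorphic to `(AG(2,3)\e)*`. -/
def IsAGdeDual (M : Matroid α) : Prop := IsAGde M✶

/-- The columns `[I₄ | A]` of the `GF(3)`-representation of `Δ₃(AG(2,3)\e)`, where `A` has
rows `(1,0,-1,0), (1,0,1,1), (1,1,0,1), (0,1,1,-1)`. -/
def deltaAGCols : Fin 8 → Fin 4 → ZMod 3 :=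
  ![![1,0,0,0], ![0,1,0,0], ![0,0,1,0], ![0,0,0,1],
    ![1,1,1,0], ![0,0,1,1], ![-1,1,0,1], ![0,1,1,-1]]

/-- `M` is isomorphic to `Δ₃(AG(2,3)\e)`. -/
def IsDeltaAG (M : Matroid α) : Prop := IsColM deltaAGCols M

/-- `X` is a circuit-hyperplane of `M`. -/
def IsCircuitHyperplane (M : Matroid α) (X : Set α) : Prop :=
  IsCircuitM M X ∧ M.IsFlat X ∧ eRank M X + 1 = eRank M M.E

/-- `M` is isomorphic to `P₈⁼`, obtained from `P₈` by relaxing its two disjoint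
circuit-hyperplanes. -/
def IsP8eq (M : Matroid α) : Prop :=
  ∃ (N : Matroid α) (X Y : Set α), IsP8 N ∧ N.E = M.E ∧
    IsCircuitHyperplane N X ∧ IsCircuitHyperplane N Y ∧ Disjoint X Y ∧
    ∀ B ⊆ M.E, (M.IsBase B ↔ (N.IsBase B ∨ B = X ∨ B = Y))

/-- `M` is isomorphic to the Steiner-system matroid `S(5,6,12)`: a rank-6 paving matroid on
12 elements whose circuit-hyperplanes are the blocks of an `S(5,6,12)` Steiner system. -/
def IsSteiner (M : Matroid α) : Prop :=
  ∃ Bl : Set (Set α), M.E.Finite ∧ M.E.ncard = 12 ∧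
    (∀ b ∈ Bl, b ⊆ M.E ∧ b.ncard = 6) ∧
    (∀ s ⊆ M.E, s.ncard = 5 → ∃! b, b ∈ Bl ∧ s ⊆ b) ∧
    (∀ I ⊆ M.E, (M.Indep I ↔ I.ncard ≤ 6 ∧ I ∉ Bl))

/-! ### Excluded-minor classes and superfluous subsets -/

/-- The class of (finite) matroids on `ℕ` having no minor isomorphic to `P i` for `i ∈ S`. -/
def ExClass {k : ℕ} (P : Fin k → Matroid ℕ → Prop) (S : Finset (Fin k)) : Set (Matroid ℕ) :=
  {M | M.E.Finite ∧ ∀ i ∈ S, ¬ ∃ N, IsMinor N M ∧ P i N}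

/-- With `P` listing the excluded minors of a class, the subset `E'` of the excluded minors
is superfluous if `ex(E − E') − ex(E)` contains only finitely many 3-connected matroids up
to isomorphism. -/
def Superfluous {k : ℕ} (P : Fin k → Matroid ℕ → Prop) (E' : Finset (Fin k)) : Prop :=
  ∃ L : List (Matroid ℕ),
    ∀ M ∈ ExClass P (Finset.univ \ E') \ ExClass P Finset.univ,
      ThreeConnected M → ∃ N ∈ L, MIso M N

/-! ### Lines, triangles, triads and fans -/

/-- `L` is a 3-point line of `M`: a rank-2 flat with exactly three elements. -/
def IsLine3 (M : Matroid α) (L : Set α) : Prop :=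
  M.IsFlat L ∧ eRank M L = 2 ∧ L.encard = 3

/-- A triangle is a 3-element circuit. -/
def IsTriangle (M : Matroid α) (T : Set α) : Prop := IsCircuitM M T ∧ T.encard = 3

/-- A triad is a 3-element cocircuit. -/
def IsTriad (M : Matroid α) (T : Set α) : Prop := IsCircuitM M✶ T ∧ T.encard = 3

/-- `(x 1, …, x k)` is a fan of `M`: an ordered sequence of distinct elements of the ground
set such that each three consecutive elements form a triangle or a triad, and triangles and
triads alternate. -/
def IsFan (M : Matroid α) (k : ℕ) (x : ℕ → α) : Prop :=
  3 ≤ k ∧ Set.InjOn x (Set.Icc 1 k) ∧ (∀ i, 1 ≤ i → i ≤ k → x i ∈ M.E) ∧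
  ∀ i, 1 ≤ i → i + 2 ≤ k →
    ((IsTriangle M {x i, x (i+1), x (i+2)} ∨ IsTriad M {x i, x (i+1), x (i+2)}) ∧
      (i + 3 ≤ k →
        (IsTriangle M {x i, x (i+1), x (i+2)} → IsTriad M {x (i+1), x (i+2), x (i+3)}) ∧
        (IsTriad M {x i, x (i+1), x (i+2)} → IsTriangle M {x (i+1), x (i+2), x (i+3)})))

/-! ### Full closure -/

/-- The full closure of `X`: the intersection of all sets containing `X` that are closed in
both `M` and `M✶`. -/
def Fcl (M : Matroid α) (X : Set α) : Set α :=
  ⋂₀ {Y | X ⊆ Y ∧ M.closure Y = Y ∧ M✶.closure Y = Y}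

/-! ### Wheels and generalized parallel connections -/

/-- The columns of the standard `ℚ`-representation of the rank-`n` wheel `W_n`:
spoke `i` is `e_i`, and rim element `i` is `e_i - e_{i+1}` (indices mod `n`). -/
noncomputable def wheelCols (n : ℕ) : Fin n ⊕ Fin n → Fin n → ℚ
  | .inl i => Pi.single i 1
  | .inr i => Pi.single i 1 - Pi.single ⟨((i : ℕ) + 1) % n, Nat.mod_lt _ i.pos⟩ 1

/-- `W` is a copy of the rank-`n` wheel, with spokes `s 1, …, s n` and rim elements
`r 1, …, r n`, so that `{s i, r i, s (i+1)}` is a triangle and `{r i, s (i+1), r (i+1)}` is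
a triad (indices mod `n`). -/
def IsWheel (W : Matroid α) (n : ℕ) (s r : ℕ → α) : Prop :=
  ReppedBy W (wheelCols n)
    (Sum.elim (fun i : Fin n => s ((i : ℕ) + 1)) (fun i : Fin n => r ((i : ℕ) + 1)))

/-- `P` is the generalized parallel connection of `W` and `M` (over the common restriction
`W.E ∩ M.E`, assumed to be a modular flat of `W`), characterized by its flats:
`F` is a flat of `P` iff `F ∩ W.E` is a flat of `W` and `F ∩ M.E` is a flat of `M`. -/
def IsGPC (W M P : Matroid α) : Prop :=
  P.E = W.E ∪ M.E ∧ ∀ F ⊆ P.E, (P.IsFlat F ↔ W.IsFlat (F ∩ W.E) ∧ M.IsFlat (F ∩ M.E))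

/-- `L = Λ_T^n(M)` for the triangle `T = {x₁, x₂, x₃}` of `M` : the generalized parallel
connection of the wheel `W_n` with `M`, where `s 1, r n, s n` of `W_n` are relabelled
`x₁, x₂, x₃`, with `x₂` deleted. -/
def IsLambdaExt (M : Matroid α) (x₁ x₂ x₃ : α) (n : ℕ) (L : Matroid α) : Prop :=
  ∃ (W P : Matroid α) (s r : ℕ → α), IsWheel W n s r ∧
    s 1 = x₁ ∧ r n = x₂ ∧ s n = x₃ ∧ W.E ∩ M.E = {x₁, x₂, x₃} ∧
    IsGPC W M P ∧ L = del P {x₂}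

/-- `D = Δ_T(M)`, the `Δ-Y` exchange of `M` on the coindependent triangle
`T = {x₁, x₂, x₃}`: the generalized parallel connection of `M(K₄) = W₃` with `M` across
`T`, with `T` deleted. -/
def IsDeltaY (M : Matroid α) (x₁ x₂ x₃ : α) (D : Matroid α) : Prop :=
  ∃ (W P : Matroid α) (s r : ℕ → α), IsWheel W 3 s r ∧
    s 1 = x₁ ∧ r 3 = x₂ ∧ s 3 = x₃ ∧ W.E ∩ M.E = {x₁, x₂, x₃} ∧
    IsGPC W M P ∧ D = del P {x₁, x₂, x₃}

/-- The columns `[I₃ | A]` of the `GF(3)`-representation of the matroid `M₈`, where `A` has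
rows `(1,1,0,1,0), (1,0,1,1,1), (0,1,1,1,-1)`. -/
def m8Cols : Fin 8 → Fin 3 → ZMod 3 :=
  ![![1,0,0], ![0,1,0], ![0,0,1], ![1,1,0], ![1,0,1], ![0,1,1], ![1,1,1], ![0,1,-1]]

/-!
Adding to a set `X` an element of `cl(X)` or of `cl*(X)` does not increase `λ(X)`, since
`λ_M = λ_{M*}`. Take a maximal set `X` with `A ⊆ X ⊆ fcl(A)` that is 2-separating and has at
least two elements outside it. If `X` were not fully closed, some `e ∈ (cl(X) ∪ cl*(X)) − X`
could be added, unless `E − X = {e, f}`. But then, say for `e ∈ cl(X)`, connectivity across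
`(X ∪ e, {f})` gives `r(X) = r(M)`, so `r{e, f} ≤ 1`, contradicting simplicity; the case
`e ∈ cl*(X)` is dual and uses cosimplicity. Hence `X = fcl(A)`.
-/

section TwoSeparating

variable {M : Matroid α} {X C : Set α} {e : α}

lemma eRank_eq_eRk (M : Matroid α) (X : Set α) : eRank M X = M.eRk X := by
  refine le_antisymm (iSup₂_le fun I hI => hI.1.encard_le_eRk_of_subset hI.2) ?_
  obtain ⟨I, hI⟩ := M.exists_isBasis' X
  exact hI.eRk_eq_encard ▸ le_iSup₂_of_le I ⟨hI.indep, hI.subset⟩ le_rfl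

lemma isCircuitM_iff : IsCircuitM M C ↔ M.IsCircuit C := by
  rw [isCircuit_iff_dep_forall_sdiff_singleton_indep, dep_iff, IsCircuitM]
  tauto

lemma eRk_insert_of_mem_closure (he : e ∈ M.closure X) : M.eRk (insert e X) = M.eRk X := by
  rw [← eRk_insert_closure_eq, insert_eq_of_mem he, eRk_closure_eq]

/-- `λ_M(X) + r(M)`, which avoids the truncated subtraction in `λ_M(X)`. -/
noncomputable def conn (M : Matroid α) (X : Set α) : ℕ∞ := M.eRk X + M.eRk (M.E \ X)

def IsTwoSeparating (M : Matroid α) (X : Set α) : Prop := conn M X ≤ M.eRank + 1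

def NoOneSeparation (M : Matroid α) : Prop :=
  ∀ X ⊆ M.E, X.Nonempty → (M.E \ X).Nonempty → M.eRank + 1 ≤ conn M X

lemma conn_insert_le_of_mem_closure (he : e ∈ M.closure X) : conn M (insert e X) ≤ conn M X :=
  add_le_add (eRk_insert_of_mem_closure he).le
    (M.eRk_mono (sdiff_subset_sdiff_right (subset_insert e X)))

lemma conn_dual_add_eRank [M.RankFinite] (hX : X ⊆ M.E) :
    conn M✶ X + M.eRank = conn M X + M✶.eRank := by
  have hXdual := M.eRk_dual_add_eRank X
  have hYdual := M.eRk_dual_add_eRank (M.E \ X)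
  rw [sdiff_sdiff_cancel_left hX] at hYdual
  refine WithTop.add_right_cancel (M.eRank_ne_top_iff.2 inferInstance) ?_
  calc conn M✶ X + M.eRank + M.eRank
      = (M✶.eRk X + M.eRank) + (M✶.eRk (M.E \ X) + M.eRank) := by rw [conn, dual_ground]; ring
    _ = conn M X + ((M.E \ X).encard + X.encard) := by rw [hXdual, hYdual, conn]; ring
    _ = conn M X + M✶.eRank + M.eRank := by
      rw [encard_sdiff_add_encard_of_subset hX, ← M.eRank_add_eRank_dual]; ring

lemma isTwoSeparating_dual_iff [M.Finite] (hX : X ⊆ M.E) :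
    IsTwoSeparating M✶ X ↔ IsTwoSeparating M X := by
  rw [IsTwoSeparating, IsTwoSeparating,
    ← ENat.add_le_add_iff_right (M.eRank_ne_top_iff.2 inferInstance), conn_dual_add_eRank hX,
    show M✶.eRank + 1 + M.eRank = M.eRank + 1 + M✶.eRank by ring,
    ENat.add_le_add_iff_right (M✶.eRank_ne_top_iff.2 inferInstance)]

lemma NoOneSeparation.dual [M.Finite] (hM : NoOneSeparation M) : NoOneSeparation M✶ := by
  intro X hX hne hne'
  rw [← ENat.add_le_add_iff_right (M.eRank_ne_top_iff.2 inferInstance),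
    conn_dual_add_eRank (M := M) hX,
    show M✶.eRank + 1 + M.eRank = M.eRank + 1 + M✶.eRank by ring,
    ENat.add_le_add_iff_right (M✶.eRank_ne_top_iff.2 inferInstance)]
  exact hM X hX hne hne'

lemma IsTwoSeparating.insert_of_mem_closure (h : IsTwoSeparating M X) (he : e ∈ M.closure X) :
    IsTwoSeparating M (insert e X) :=
  (conn_insert_le_of_mem_closure he).trans h

lemma IsTwoSeparating.insert_of_mem_dual_closure [M.Finite] (h : IsTwoSeparating M X)
    (hX : X ⊆ M.E) (he : e ∈ M✶.closure X) : IsTwoSeparating M (insert e X) := by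
  have heE : e ∈ M.E := M✶.closure_subset_ground X he
  rw [← isTwoSeparating_dual_iff (insert_subset heE hX)]
  exact ((isTwoSeparating_dual_iff hX).2 h).insert_of_mem_closure he

lemma IsTwoSeparating.insert_of_mem_closure_union [M.Finite] (h : IsTwoSeparating M X)
    (hX : X ⊆ M.E) (he : e ∈ M.closure X ∪ M✶.closure X) : IsTwoSeparating M (insert e X) :=
  he.elim h.insert_of_mem_closure (h.insert_of_mem_dual_closure hX)

lemma ConnectedM.noOneSeparation [M.RankFinite] (hM : ConnectedM M) : NoOneSeparation M := by
  rintro X hX ⟨e, heX⟩ ⟨f, hfY⟩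
  set Y := M.E \ X
  have hef : e ≠ f := by rintro rfl; exact hfY.2 heX
  obtain ⟨C, hC, heC, hfC⟩ := (hM.2 e (hX heX) f hfY.1).resolve_left hef
  rw [isCircuitM_iff] at hC
  have hXC : M.Indep (X ∩ C) := (hC.sdiff_singleton_indep hfC).subset
    (subset_sdiff_singleton inter_subset_right fun h => hfY.2 h.1)
  have hYC : M.Indep (Y ∩ C) := (hC.sdiff_singleton_indep heC).subset
    (subset_sdiff_singleton inter_subset_right fun h => h.1.2 heX)
  have hcard : (X ∩ C).encard + (Y ∩ C).encard = C.encard := by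
    rw [← encard_union_eq (disjoint_sdiff_right.mono inter_subset_left inter_subset_left),
      ← union_inter_distrib_right, union_sdiff_cancel hX,
      inter_eq_self_of_subset_right hC.subset_ground]
  have hcover : M.eRk C + M.eRank ≤ M.eRk (X ∪ C) + M.eRk (Y ∪ C) := by
    have hinter : (X ∪ C) ∩ (Y ∪ C) = C := by simp only [Y]; tauto_set
    have hunion : (X ∪ C) ∪ (Y ∪ C) = M.E := by
      have := hC.subset_ground
      simp only [Y]; tauto_set
    simpa [hinter, hunion] using M.eRk_submod (X ∪ C) (Y ∪ C)
  have hrC : M.eRk C + M.eRk C ≠ ⊤ := by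
    have := (M.isRkFinite_set C).eRk_lt_top.ne
    exact WithTop.add_ne_top.2 ⟨this, this⟩
  rw [← ENat.add_le_add_iff_right hrC]
  calc M.eRank + 1 + (M.eRk C + M.eRk C) = (M.eRk C + M.eRank) + (M.eRk C + 1) := by ring
    _ = (M.eRk C + M.eRank) + (M.eRk (X ∩ C) + M.eRk (Y ∩ C)) := by
      rw [hC.eRk_add_one_eq, hXC.eRk_eq_encard, hYC.eRk_eq_encard, hcard]
    _ ≤ (M.eRk (X ∪ C) + M.eRk (Y ∪ C)) + (M.eRk (X ∩ C) + M.eRk (Y ∩ C)) := by gcongr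
    _ = (M.eRk (X ∩ C) + M.eRk (X ∪ C)) + (M.eRk (Y ∩ C) + M.eRk (Y ∪ C)) := by ring
    _ ≤ (M.eRk X + M.eRk C) + (M.eRk Y + M.eRk C) :=
      add_le_add (M.eRk_submod X C) (M.eRk_submod Y C)
    _ = conn M X + (M.eRk C + M.eRk C) := by rw [conn]; ring

lemma encard_sdiff_ne_two_of_mem_closure [M.RankFinite] (hM : NoOneSeparation M)
    (hs : SimpleM M) (hX : X ⊆ M.E) (hsep : IsTwoSeparating M X) (he : e ∈ M.closure X \ X) :
    (M.E \ X).encard ≠ 2 := by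
  intro h2
  have heE : e ∈ M.E \ X := ⟨M.closure_subset_ground X he.1, he.2⟩
  have hrest : M.E \ insert e X = (M.E \ X) \ {e} := by rw [sdiff_sdiff, union_singleton]
  obtain ⟨f, hf⟩ : ∃ f, M.E \ insert e X = {f} := by
    rw [← encard_eq_one, hrest, encard_sdiff_singleton_of_mem heE, h2]
    rfl
  have hfE : f ∈ (M.E \ X) \ {e} := hrest ▸ hf ▸ mem_singleton f
  have hpair : M.E \ X = {e, f} := by
    rw [← insert_eq_of_mem heE, ← insert_sdiff_singleton, ← hrest, hf]
  have hr : M.eRank ≤ M.eRk X := by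
    rw [← ENat.add_le_add_iff_right WithTop.one_ne_top]
    calc M.eRank + 1 ≤ M.eRk (insert e X) + M.eRk (M.E \ insert e X) :=
          hM _ (insert_subset heE.1 hX) (insert_nonempty e X) (hf ▸ singleton_nonempty f)
      _ ≤ M.eRk X + 1 := by
          rw [eRk_insert_of_mem_closure he.1, hf]; gcongr; exact M.eRk_singleton_le f
  have hrpair : M.eRk {e, f} = 2 := by
    rw [(hs e heE.1 f hfE.1.1).eRk_eq_encard, encard_pair (Ne.symm hfE.2)]
  have hle : M.eRk X + 2 ≤ M.eRk X + 1 := by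
    rw [← hrpair, ← hpair]; exact hsep.trans (by gcongr)
  rw [ENat.add_le_add_iff_left (M.isRkFinite_set X).eRk_lt_top.ne] at hle
  exact absurd hle (by decide)

lemma two_le_encard_sdiff_insert [M.Finite] (hM : ConnectedM M) (hs : SimpleM M)
    (hcs : CosimpleM M) (hX : X ⊆ M.E) (hsep : IsTwoSeparating M X)
    (h2 : 2 ≤ (M.E \ X).encard) (he : e ∈ (M.closure X ∪ M✶.closure X) \ X) :
    2 ≤ (M.E \ insert e X).encard := by
  have hne : (M.E \ X).encard ≠ 2 := by
    obtain ⟨he | he, heX⟩ := he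
    · exact encard_sdiff_ne_two_of_mem_closure hM.noOneSeparation hs hX hsep ⟨he, heX⟩
    · exact encard_sdiff_ne_two_of_mem_closure (M := M✶) hM.noOneSeparation.dual hcs hX
        ((isTwoSeparating_dual_iff hX).2 hsep) ⟨he, heX⟩
  have heE : e ∈ M.E \ X := ⟨he.1.elim (M.closure_subset_ground X ·)
    (M✶.closure_subset_ground X ·), he.2⟩
  rw [← ENat.lt_add_one_iff (M.ground_finite.subset sdiff_subset).encard_lt_top.ne,
    ← union_singleton, ← Set.sdiff_sdiff, encard_sdiff_singleton_add_one heE]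
  exact h2.lt_of_ne' hne

end TwoSeparating

section FullClosure

variable {M : Matroid α} {A : Set α}

lemma subset_Fcl (M : Matroid α) (A : Set α) : A ⊆ Fcl M A :=
  subset_sInter fun _ hY => hY.1

lemma Fcl_subset_of_closure_eq {Y : Set α} (hAY : A ⊆ Y) (hY : M.closure Y = Y)
    (hY' : M✶.closure Y = Y) : Fcl M A ⊆ Y :=
  sInter_subset_of_mem ⟨hAY, hY, hY'⟩

lemma Fcl_subset_ground (hA : A ⊆ M.E) : Fcl M A ⊆ M.E :=
  Fcl_subset_of_closure_eq hA M.closure_ground M✶.closure_ground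

lemma closure_Fcl_subset : M.closure (Fcl M A) ⊆ Fcl M A :=
  subset_sInter fun _ hY =>
    (M.closure_subset_closure (sInter_subset_of_mem hY)).trans hY.2.1.subset

lemma dual_closure_Fcl_subset : M✶.closure (Fcl M A) ⊆ Fcl M A :=
  subset_sInter fun _ hY =>
    (M✶.closure_subset_closure (sInter_subset_of_mem hY)).trans hY.2.2.subset

end FullClosure

section Main

variable {M : Matroid α} {A B : Set α}

lemma TwoSep.eq_sdiff (h : TwoSep M A B) : B = M.E \ A := by
  rw [← h.1, union_sdiff_left, h.2.1.symm.sdiff_eq_left]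

lemma twoSep_sdiff_iff : TwoSep M A (M.E \ A) ↔
    A ⊆ M.E ∧ 2 ≤ A.encard ∧ 2 ≤ (M.E \ A).encard ∧ IsTwoSeparating M A := by
  simp only [TwoSep, Set.union_sdiff_self, union_eq_right, disjoint_sdiff_right, true_and,
    IsTwoSeparating, conn, eRank_eq_eRk, eRk_ground]

theorem isTwoSeparating_Fcl [M.Finite] (hM : ConnectedM M) (hs : SimpleM M) (hcs : CosimpleM M)
    (hA : A ⊆ M.E) (hsep : IsTwoSeparating M A) (h2 : 2 ≤ (M.E \ A).encard) :
    IsTwoSeparating M (Fcl M A) ∧ 2 ≤ (M.E \ Fcl M A).encard := by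
  let P : Set (Set α) :=
    {X | A ⊆ X ∧ X ⊆ Fcl M A ∧ IsTwoSeparating M X ∧ 2 ≤ (M.E \ X).encard}
  have hPfin : P.Finite :=
    M.ground_finite.finite_subsets.subset fun X hX => hX.2.1.trans (Fcl_subset_ground hA)
  obtain ⟨X, ⟨hAX, hXF, hXsep, hX2⟩, hXmax⟩ :=
    hPfin.exists_maximal ⟨A, subset_rfl, subset_Fcl M A, hsep, h2⟩
  have hXE : X ⊆ M.E := hXF.trans (Fcl_subset_ground hA)
  have hclF : M.closure X ∪ M✶.closure X ⊆ Fcl M A :=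
    union_subset ((M.closure_subset_closure hXF).trans closure_Fcl_subset)
      ((M✶.closure_subset_closure hXF).trans dual_closure_Fcl_subset)
  have hclX : M.closure X ∪ M✶.closure X ⊆ X := by
    intro e he
    by_contra heX
    exact heX <| hXmax ⟨hAX.trans (subset_insert e X), insert_subset (hclF he) hXF,
      hXsep.insert_of_mem_closure_union hXE he,
      two_le_encard_sdiff_insert hM hs hcs hXE hXsep hX2 ⟨he, heX⟩⟩
      (subset_insert e X) (mem_insert e X)
  have hFX : Fcl M A = X := subset_antisymm (Fcl_subset_of_closure_eq hAX
    ((subset_union_left.trans hclX).antisymm (M.subset_closure X hXE))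
    ((subset_union_right.trans hclX).antisymm (M✶.subset_closure X hXE))) hXF
  exact hFX ▸ ⟨hXsep, hX2⟩

end Main

/-- If `M` is a simple, cosimple, connected matroid and `(A, B)` is a 2-separation of `M`,
then `(fcl_M(A), B − fcl_M(A))` is a 2-separation of `M`. -/
theorem statement14 {α : Type} (M : Matroid α) (hfin : M.E.Finite) (hs : SimpleM M) (hcs : CosimpleM M)
    (hconn : ConnectedM M) (A B : Set α) (hAB : TwoSep M A B) :
    TwoSep M (Fcl M A) (B \ Fcl M A) := by
  have : M.Finite := ⟨hfin⟩
  obtain rfl := hAB.eq_sdiff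
  obtain ⟨hA, hA2, hB2, hsep⟩ := twoSep_sdiff_iff.1 hAB
  obtain ⟨hsepF, hB2F⟩ := isTwoSeparating_Fcl hconn hs hcs hA hsep hB2
  rw [Set.sdiff_sdiff, union_eq_right.2 (subset_Fcl M A), twoSep_sdiff_iff]
  exact ⟨Fcl_subset_ground hA, hA2.trans (encard_mono (subset_Fcl M A)), hB2F, hsepF⟩

end ExMinors
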